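/- Assume lim_{s→∞} f'(s)F(s) = q with q > 1, and let λ ∈ (0, 2(q−1)). Then there exist ρ₁ ≥ ρ₀ and C > 0 such that for all ρ ≥ ρ₁: ∫_{ρ₁}^{ρ} e^{λτ}·| f(φ(τ))F(φ(τ))/φ(τ) − (q−1) | dτ ≤ C·( ∫_{ρ₁}^{ρ} e^{λτ}·| f'(φ(τ))F(φ(τ)) − q | dτ + e^{λρ₁}·| f(φ(ρ₁))F(φ(ρ₁))/φ(ρ₁) − (q−1) | ). (Here q−1 = 1/(p−1) with p = q/(q−1).) -/

import Mathlib

/-!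
Write `G = f F`, so that `G' = f' F - 1 → q - 1` and, by an ∞/∞ l'Hôpital argument,
`G(s)/s → q - 1`. Along the trajectory, `φ' = 2 G(φ)` turns `u = G(φ)/φ` into a solution of the
Riccati-type equation `u' = 2u (G'(φ) - u)`, so `y = e^{λτ} (u - (q - 1))` solves the linear
equation `y' = -(2u - λ) y + 2u e^{λτ} (f'(φ) F(φ) - q)`. Once `u` is close to `q - 1`, the damping
`2u - λ` is bounded below by some `κ > 0`, and variation of constants gives
`κ ∫ |y| ≤ |y(ρ₁)| + ∫ |forcing|`.
-/

open Set Filter Topology MeasureTheory intervalIntegral Real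

theorem tendsto_div_self_of_hasDerivAt_tendsto {g g' : ℝ → ℝ} {L : ℝ}
    (hg : ∀ᶠ s in atTop, HasDerivAt g (g' s) s) (hg' : Tendsto g' atTop (𝓝 L)) :
    Tendsto (fun s => g s / s) atTop (𝓝 L) := by
  set h : ℝ → ℝ := fun s => g s - L * s
  have hlo : h =o[atTop] id := by
    refine Asymptotics.IsLittleO.of_bound fun ε hε => ?_
    obtain ⟨s₀, hs₀⟩ := eventually_atTop.1 ((hg.and (eventually_ge_atTop 0)).and
      (hg'.eventually (Metric.closedBall_mem_nhds L (half_pos hε))))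
    have hmv : ∀ s ≥ s₀, ‖h s - h s₀‖ ≤ ε / 2 * (s - s₀) := fun s hs =>
      norm_image_sub_le_of_norm_deriv_le_segment' (f' := fun t => g' t - L)
        (fun t ht => ((hs₀ t ht.1).1.1.sub ((hasDerivAt_id t).const_mul L)).hasDerivWithinAt
          |>.congr_deriv (by simp))
        (fun t ht => (hs₀ t ht.1).2) s ⟨hs, le_rfl⟩
    filter_upwards [eventually_ge_atTop s₀, eventually_ge_atTop (2 * ‖h s₀‖ / ε)]
      with s hs hs'
    have hs₀_nonneg := (hs₀ s₀ le_rfl).1.2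
    rw [div_le_iff₀ hε] at hs'
    rw [id, Real.norm_of_nonneg (show 0 ≤ s by linarith)]
    linarith [norm_sub_norm_le (h s) (h s₀), hmv s hs, mul_nonneg hε.le hs₀_nonneg]
  have hdiv := hlo.tendsto_div_nhds_zero.add_const L
  rw [zero_add] at hdiv
  refine hdiv.congr' ?_
  filter_upwards [eventually_ne_atTop 0] with s hs
  simp only [h, id]
  field_simp
  ring

theorem hasDerivAt_integral_Ioi {g : ℝ → ℝ} {a s : ℝ} (hg : IntegrableOn g (Ioi a))
    (has : a < s) (hgs : ContinuousAt g s) :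
    HasDerivAt (fun t => ∫ x in Ioi t, g x) (-g s) s := by
  have hsplit : (fun t => ∫ x in Ioi t, g x) =ᶠ[𝓝 s]
      fun t => (∫ x in Ioi a, g x) - ∫ x in a..t, g x := by
    filter_upwards [Ioi_mem_nhds has] with t ht
    rw [← integral_Ioi_sub_Ioi hg ht.le, sub_sub_cancel]
  have hint : IntervalIntegrable g volume a s :=
    (intervalIntegrable_iff_integrableOn_Ioc_of_le has.le).2 (hg.mono_set Ioc_subset_Ioi_self)
  exact ((integral_hasDerivAt_right hint
    (AEStronglyMeasurable.stronglyMeasurableAtFilter_of_mem hg.aestronglyMeasurable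
      (Ioi_mem_nhds has))
    hgs).const_sub _).congr_of_eventuallyEq hsplit

theorem hasDerivAt_integral_of_continuousOn_Icc {g : ℝ → ℝ} {a b t : ℝ}
    (hg : ContinuousOn g (Icc a b)) (ht : t ∈ Ioo a b) :
    HasDerivAt (fun u => ∫ x in a..u, g x) (g t) t :=
  integral_hasDerivAt_right
    ((hg.mono (Icc_subset_Icc_right ht.2.le)).intervalIntegrable_of_Icc ht.1.le)
    ((hg.mono Ioo_subset_Icc_self).stronglyMeasurableAtFilter isOpen_Ioo t ht)
    (hg.continuousAt (Icc_mem_nhds ht.1 ht.2))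

theorem continuousOn_integral_of_continuousOn_Icc {g : ℝ → ℝ} {a b : ℝ} (hab : a ≤ b)
    (hg : ContinuousOn g (Icc a b)) : ContinuousOn (fun u => ∫ x in a..u, g x) (Icc a b) := by
  have := continuousOn_primitive_interval (μ := volume) (f := g) (a := a) (b := b)
    (by rw [uIcc_of_le hab]; exact hg.integrableOn_Icc)
  rwa [uIcc_of_le hab] at this

theorem mul_integral_le_of_hasDerivAt_le {X X' h : ℝ → ℝ} {a b κ : ℝ} (hab : a ≤ b)
    (hX : ContinuousOn X (Icc a b)) (hX' : ∀ t ∈ Ioo a b, HasDerivAt X (X' t) t)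
    (hX'int : IntervalIntegrable X' volume a b) (hh : IntervalIntegrable h volume a b)
    (hle : ∀ t ∈ Ioo a b, X' t ≤ -(κ * X t) + h t) (hXb : 0 ≤ X b) :
    κ * ∫ t in a..b, X t ≤ X a + ∫ t in a..b, h t := by
  have hκX : IntervalIntegrable (fun t => -(κ * X t)) volume a b :=
    ((hX.intervalIntegrable_of_Icc hab).const_mul κ).neg
  have hmono := integral_mono_on_of_le_Ioo hab hX'int (hκX.add hh) hle
  have hrhs : ∫ t in a..b, (-(κ * X t) + h t) = -(κ * ∫ t in a..b, X t) + ∫ t in a..b, h t := by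
    rw [integral_add hκX hh, intervalIntegral.integral_neg, intervalIntegral.integral_const_mul]
  rw [hrhs, integral_eq_sub_of_hasDerivAt_of_le hab hX hX' hX'int] at hmono
  linarith

theorem exp_mul_abs_le_of_hasDerivAt {y A c g : ℝ → ℝ} {a b : ℝ} (hab : a ≤ b)
    (hy : ContinuousOn y (Icc a b)) (hA : ContinuousOn A (Icc a b)) (hg : ContinuousOn g (Icc a b))
    (hA' : ∀ t ∈ Ioo a b, HasDerivAt A (c t) t)
    (hy' : ∀ t ∈ Ioo a b, HasDerivAt y (-(c t * y t) + g t) t) :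
    exp (A b) * |y b| ≤ exp (A a) * |y a| + ∫ t in a..b, exp (A t) * |g t| := by
  have hEA : ContinuousOn (fun t => exp (A t)) (Icc a b) := continuous_exp.comp_continuousOn hA
  have hEg : IntervalIntegrable (fun t => exp (A t) * g t) volume a b :=
    (hEA.mul hg).intervalIntegrable_of_Icc hab
  have hftc : ∫ t in a..b, exp (A t) * g t = exp (A b) * y b - exp (A a) * y a := by
    refine integral_eq_sub_of_hasDerivAt_of_le hab (hEA.mul hy) (fun t ht => ?_) hEg
    exact ((hA' t ht).exp.mul (hy' t ht)).congr_deriv (by ring)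
  calc exp (A b) * |y b| = |exp (A a) * y a + ∫ t in a..b, exp (A t) * g t| := by
        rw [hftc, add_sub_cancel, abs_mul, abs_of_pos (exp_pos _)]
    _ ≤ exp (A a) * |y a| + ∫ t in a..b, |exp (A t) * g t| := by
        grw [abs_add_le, abs_integral_le_integral_abs hab, abs_mul, abs_of_pos (exp_pos _)]
    _ = exp (A a) * |y a| + ∫ t in a..b, exp (A t) * |g t| := by
        simp only [abs_mul, abs_of_pos (exp_pos _)]

theorem mul_integral_abs_le_of_hasDerivAt {y c g : ℝ → ℝ} {a b κ : ℝ} (hab : a ≤ b)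
    (hκ : 0 ≤ κ) (hy : ContinuousOn y (Icc a b)) (hc : ContinuousOn c (Icc a b))
    (hg : ContinuousOn g (Icc a b)) (hy' : ∀ t ∈ Ioo a b, HasDerivAt y (-(c t * y t) + g t) t)
    (hcκ : ∀ t ∈ Ioo a b, κ ≤ c t) :
    κ * ∫ t in a..b, |y t| ≤ |y a| + ∫ t in a..b, |g t| := by
  set A : ℝ → ℝ := fun t => ∫ s in a..t, c s
  have hA : ContinuousOn A (Icc a b) := continuousOn_integral_of_continuousOn_Icc hab hc
  have hA' : ∀ t ∈ Ioo a b, HasDerivAt A (c t) t := fun t ht =>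
    hasDerivAt_integral_of_continuousOn_Icc hc ht
  have hEg : ContinuousOn (fun t => exp (A t) * |g t|) (Icc a b) :=
    (continuous_exp.comp_continuousOn hA).mul hg.abs
  -- the solution of `X' = -c X + |g|`, `X a = |y a|`, which dominates `|y|`
  set X : ℝ → ℝ := fun t => exp (-A t) * (|y a| + ∫ s in a..t, exp (A s) * |g s|)
  have hX : ContinuousOn X (Icc a b) := (continuous_exp.comp_continuousOn hA.neg).mul
    (continuousOn_const.add (continuousOn_integral_of_continuousOn_Icc hab hEg))
  have hX' : ∀ t ∈ Ioo a b, HasDerivAt X (-(c t * X t) + |g t|) t := by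
    intro t ht
    refine ((hA' t ht).neg.exp.mul
      ((hasDerivAt_integral_of_continuousOn_Icc hEg ht).const_add _)).congr_deriv ?_
    simp only [X, Pi.neg_apply]
    rw [← mul_assoc (exp (-A t)), ← exp_add, neg_add_cancel, exp_zero]
    ring
  have hyX : ∀ t ∈ Icc a b, |y t| ≤ X t := by
    intro t ht
    have hsub : Icc a t ⊆ Icc a b := Icc_subset_Icc_right ht.2
    have h := exp_mul_abs_le_of_hasDerivAt ht.1 (hy.mono hsub) (hA.mono hsub) (hg.mono hsub)
      (fun s hs => hA' s (Ioo_subset_Ioo_right ht.2 hs))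
      (fun s hs => hy' s (Ioo_subset_Ioo_right ht.2 hs))
    rw [show A a = 0 from integral_same, exp_zero, one_mul] at h
    calc |y t| = exp (-A t) * (exp (A t) * |y t|) := by
          rw [← mul_assoc, ← exp_add, neg_add_cancel, exp_zero, one_mul]
      _ ≤ X t := mul_le_mul_of_nonneg_left h (exp_pos _).le
  calc κ * ∫ t in a..b, |y t| ≤ κ * ∫ t in a..b, X t :=
        mul_le_mul_of_nonneg_left (integral_mono_on hab
          (hy.abs.intervalIntegrable_of_Icc hab) (hX.intervalIntegrable_of_Icc hab) hyX) hκ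
    _ ≤ X a + ∫ t in a..b, |g t| := by
        refine mul_integral_le_of_hasDerivAt_le hab hX hX'
          (((hc.mul hX).neg.add hg.abs).intervalIntegrable_of_Icc hab)
          (hg.abs.intervalIntegrable_of_Icc hab) (fun t ht => ?_)
          ((abs_nonneg _).trans (hyX b (right_mem_Icc.2 hab)))
        have hXt := (abs_nonneg _).trans (hyX t (Ioo_subset_Icc_self ht))
        nlinarith [hcκ t ht]
    _ = |y a| + ∫ t in a..b, |g t| := by
        simp only [X, A, integral_same, neg_zero, exp_zero, add_zero, one_mul]

theorem mul_integral_exp_mul_abs_sub_le {u w : ℝ → ℝ} {a b r lam κ M : ℝ} (hab : a ≤ b)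
    (hκ : 0 ≤ κ) (hu : ContinuousOn u (Icc a b)) (hw : ContinuousOn w (Icc a b))
    (hu' : ∀ t ∈ Ioo a b, HasDerivAt u (2 * u t * (w t - u t)) t)
    (hlow : ∀ t ∈ Ioo a b, lam + κ ≤ 2 * u t) (hup : ∀ t ∈ Ioo a b, |2 * u t| ≤ M) :
    κ * ∫ t in a..b, exp (lam * t) * |u t - r| ≤
      exp (lam * a) * |u a - r| + M * ∫ t in a..b, exp (lam * t) * |w t - r| := by
  have hexp : ContinuousOn (fun t => exp (lam * t)) (Icc a b) := by fun_prop
  have key := mul_integral_abs_le_of_hasDerivAt (y := fun t => exp (lam * t) * (u t - r))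
    (c := fun t => 2 * u t - lam) (g := fun t => exp (lam * t) * (2 * u t) * (w t - r))
    hab hκ (hexp.mul (hu.sub continuousOn_const))
    ((continuousOn_const.mul hu).sub continuousOn_const)
    ((hexp.mul (continuousOn_const.mul hu)).mul (hw.sub continuousOn_const))
    (fun t ht => (((hasDerivAt_id' t).const_mul lam).exp.mul ((hu' t ht).sub_const r)).congr_deriv
      (by ring))
    (fun t ht => by linarith [hlow t ht])
  simp only [abs_mul, abs_two, abs_of_pos (exp_pos _)] at key
  refine key.trans (add_le_add le_rfl ?_)
  rw [← intervalIntegral.integral_const_mul]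
  refine integral_mono_on_of_le_Ioo hab ?_ ?_ fun t ht => ?_
  · exact ((hexp.mul (continuousOn_const.mul hu.abs)).mul
      (hw.sub continuousOn_const).abs).intervalIntegrable_of_Icc hab
  · exact (continuousOn_const.mul
      (hexp.mul (hw.sub continuousOn_const).abs)).intervalIntegrable_of_Icc hab
  · have hMt := hup t ht
    rw [abs_mul, abs_two] at hMt
    calc exp (lam * t) * (2 * |u t|) * |w t - r| = 2 * |u t| * (exp (lam * t) * |w t - r|) := by
          ring
      _ ≤ M * (exp (lam * t) * |w t - r|) := by gcongr

theorem hasDerivAt_comp_div_self {G φ : ℝ → ℝ} {G' τ : ℝ} (hG : HasDerivAt G G' (φ τ))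
    (hφ : HasDerivAt φ (2 * G (φ τ)) τ) (hφτ : φ τ ≠ 0) :
    HasDerivAt (fun t => G (φ t) / φ t) (2 * (G (φ τ) / φ τ) * (G' - G (φ τ) / φ τ)) τ :=
  ((hG.comp τ hφ).div hφ hφτ).congr_deriv (by simp only [Function.comp_apply]; field_simp)

theorem exists_integral_exp_mul_abs_comp_div_sub_le {G G' φ : ℝ → ℝ} {L lam ρ₀ : ℝ}
    (hG : ∀ s > 0, HasDerivAt G (G' s) s) (hG'c : ContinuousOn G' (Ioi 0))
    (hG' : Tendsto G' atTop (𝓝 L)) (hφpos : ∀ τ > ρ₀, 0 < φ τ)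
    (hφ : ∀ τ > ρ₀, HasDerivAt φ (2 * G (φ τ)) τ) (hφtop : Tendsto φ atTop atTop)
    (hlam : lam < 2 * L) :
    ∃ ρ₁, ρ₀ ≤ ρ₁ ∧ ∃ C, 0 < C ∧ ∀ ρ ≥ ρ₁,
      ∫ τ in ρ₁..ρ, exp (lam * τ) * |G (φ τ) / φ τ - L| ≤
        C * ((∫ τ in ρ₁..ρ, exp (lam * τ) * |G' (φ τ) - L|) +
          exp (lam * ρ₁) * |G (φ ρ₁) / φ ρ₁ - L|) := by
  set u : ℝ → ℝ := fun τ => G (φ τ) / φ τ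
  have hu' : ∀ τ > ρ₀, HasDerivAt u (2 * u τ * (G' (φ τ) - u τ)) τ := fun τ hτ =>
    hasDerivAt_comp_div_self (hG _ (hφpos τ hτ)) (hφ τ hτ) (hφpos τ hτ).ne'
  have hu : ContinuousOn u (Ioi ρ₀) := fun τ hτ => (hu' τ hτ).continuousAt.continuousWithinAt
  have hw : ContinuousOn (fun τ => G' (φ τ)) (Ioi ρ₀) :=
    hG'c.comp (fun τ hτ => (hφ τ hτ).continuousAt.continuousWithinAt) fun τ hτ => hφpos τ hτ
  have hulim : Tendsto u atTop (𝓝 L) :=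
    (tendsto_div_self_of_hasDerivAt_tendsto ((eventually_gt_atTop 0).mono hG) hG').comp hφtop
  obtain ⟨κ, hκ, hlamκ⟩ : ∃ κ, 0 < κ ∧ lam + 2 * κ = 2 * L :=
    ⟨(2 * L - lam) / 2, by linarith, by ring⟩
  obtain ⟨ρ₁, hρ₁⟩ := eventually_atTop.1 ((eventually_gt_atTop ρ₀).and
    (hulim.eventually (Metric.ball_mem_nhds L (half_pos hκ))))
  refine ⟨ρ₁, (hρ₁ ρ₁ le_rfl).1.le, (2 * |L| + κ + 1) / κ, by positivity, fun ρ hρ => ?_⟩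
  have hsub : Icc ρ₁ ρ ⊆ Ioi ρ₀ := fun t ht => (hρ₁ t ht.1).1
  have hband : ∀ t ∈ Ioo ρ₁ ρ, |u t - L| < κ / 2 := fun t ht => (hρ₁ t ht.1.le).2
  have key := mul_integral_exp_mul_abs_sub_le (r := L) (lam := lam) (M := 2 * |L| + κ) hρ hκ.le
    (hu.mono hsub) (hw.mono hsub) (fun t ht => hu' t (hsub (Ioo_subset_Icc_self ht)))
    (fun t ht => by linarith [abs_lt.1 (hband t ht)])
    (fun t ht => by
      rw [abs_mul, abs_two]
      linarith [abs_sub_abs_le_abs_sub (u t) L, hband t ht])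
  have hJ : 0 ≤ ∫ τ in ρ₁..ρ, exp (lam * τ) * |G' (φ τ) - L| :=
    integral_nonneg hρ fun _ _ => by positivity
  rw [div_mul_eq_mul_div, le_div_iff₀ hκ]
  have hME : 0 ≤ (2 * |L| + κ) * (exp (lam * ρ₁) * |u ρ₁ - L|) := by positivity
  linarith

theorem weighted_integral_estimate_general (f F : ℝ → ℝ) (q : ℝ)
    (hf : ContDiffOn ℝ 2 f (Set.Ioi 0))
    (hfpos : ∀ s : ℝ, 0 < s → 0 < f s)
    (hfint : ∀ s : ℝ, 0 < s →
      MeasureTheory.IntegrableOn (fun t => (f t)⁻¹) (Set.Ioi s))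
    (hF : ∀ s : ℝ, F s = ∫ t in Set.Ioi s, (f t)⁻¹)
    (hlim : Filter.Tendsto (fun s => deriv f s * F s) Filter.atTop (nhds q))
    (ρ₀ : ℝ) (φ : ℝ → ℝ)
    (hφpos : ∀ ρ ∈ Set.Ici ρ₀, 0 < φ ρ)
    (hφderiv : ∀ ρ ∈ Set.Ici ρ₀,
      HasDerivWithinAt φ (2 * f (φ ρ) * F (φ ρ)) (Set.Ici ρ₀) ρ)
    (hφtop : Filter.Tendsto φ Filter.atTop Filter.atTop)
    (lam : ℝ) (hlam' : lam < 2 * (q - 1)) :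
    ∃ ρ₁ : ℝ, ρ₀ ≤ ρ₁ ∧ ∃ C : ℝ, 0 < C ∧ ∀ ρ ≥ ρ₁,
      (∫ τ in ρ₁..ρ, Real.exp (lam * τ) * |f (φ τ) * F (φ τ) / φ τ - (q - 1)|) ≤
        C * ((∫ τ in ρ₁..ρ, Real.exp (lam * τ) * |deriv f (φ τ) * F (φ τ) - q|) +
          Real.exp (lam * ρ₁) * |f (φ ρ₁) * F (φ ρ₁) / φ ρ₁ - (q - 1)|) := by
  have hfd : ∀ s > 0, HasDerivAt f (deriv f s) s := fun s hs =>
    ((hf.differentiableOn two_ne_zero).differentiableAt (Ioi_mem_nhds hs)).hasDerivAt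
  have hFd : ∀ s > 0, HasDerivAt F (-(f s)⁻¹) s := fun s hs => by
    rw [funext hF]
    exact hasDerivAt_integral_Ioi (hfint _ (half_pos hs)) (half_lt_self hs)
      ((hf.continuousOn.continuousAt (Ioi_mem_nhds hs)).inv₀ (hfpos s hs).ne')
  have hG : ∀ s > 0, HasDerivAt (fun t => f t * F t) (deriv f s * F s - 1) s := fun s hs =>
    ((hfd s hs).mul (hFd s hs)).congr_deriv (by field_simp [(hfpos s hs).ne']; ring)
  have hG'c : ContinuousOn (fun s => deriv f s * F s - 1) (Ioi 0) :=
    ((hf.continuousOn_deriv_of_isOpen isOpen_Ioi one_le_two).mul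
      fun s hs => (hFd s hs).continuousAt.continuousWithinAt).sub continuousOn_const
  have hφ : ∀ τ > ρ₀, HasDerivAt φ (2 * (f (φ τ) * F (φ τ))) τ := fun τ hτ =>
    ((hφderiv τ hτ.le).hasDerivAt (Ici_mem_nhds hτ)).congr_deriv (mul_assoc _ _ _)
  simpa only [sub_sub_sub_cancel_right] using exists_integral_exp_mul_abs_comp_div_sub_le hG hG'c
    (hlim.sub_const 1) (fun τ hτ => hφpos τ hτ.le) hφ hφtop hlam'

/-- If `f'(s)F(s) → q` with `q > 1` and `λ ∈ (0, 2(q−1))`, there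
exist `ρ₁ ≥ ρ₀` and `C > 0` such that for all `ρ ≥ ρ₁`,
`∫_{ρ₁}^{ρ} e^{λτ} |f(φ)F(φ)/φ − (q−1)| dτ ≤
 C (∫_{ρ₁}^{ρ} e^{λτ} |f'(φ)F(φ) − q| dτ + e^{λρ₁} |f(φ(ρ₁))F(φ(ρ₁))/φ(ρ₁) − (q−1)|)`. -/
theorem weighted_integral_estimate (f F : ℝ → ℝ) (q : ℝ) (hq : 1 < q)
    (hf : ContDiffOn ℝ 2 f (Set.Ioi 0))
    (hfpos : ∀ s : ℝ, 0 < s → 0 < f s)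
    (hf'pos : ∀ s : ℝ, 0 < s → 0 < deriv f s)
    (hfint : ∀ s : ℝ, 0 < s →
      MeasureTheory.IntegrableOn (fun t => (f t)⁻¹) (Set.Ioi s))
    (hF : ∀ s : ℝ, F s = ∫ t in Set.Ioi s, (f t)⁻¹)
    (hlim : Filter.Tendsto (fun s => deriv f s * F s) Filter.atTop (nhds q))
    (ρ₀ : ℝ) (φ : ℝ → ℝ)
    (hφpos : ∀ ρ ∈ Set.Ici ρ₀, 0 < φ ρ)
    (hφderiv : ∀ ρ ∈ Set.Ici ρ₀,
      HasDerivWithinAt φ (2 * f (φ ρ) * F (φ ρ)) (Set.Ici ρ₀) ρ)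
    (hφtop : Filter.Tendsto φ Filter.atTop Filter.atTop)
    (lam : ℝ) (hlam : 0 < lam) (hlam' : lam < 2 * (q - 1)) :
    ∃ ρ₁ : ℝ, ρ₀ ≤ ρ₁ ∧ ∃ C : ℝ, 0 < C ∧ ∀ ρ ≥ ρ₁,
      (∫ τ in ρ₁..ρ, Real.exp (lam * τ) * |f (φ τ) * F (φ τ) / φ τ - (q - 1)|) ≤
        C * ((∫ τ in ρ₁..ρ, Real.exp (lam * τ) * |deriv f (φ τ) * F (φ τ) - q|) +
          Real.exp (lam * ρ₁) * |f (φ ρ₁) * F (φ ρ₁) / φ ρ₁ - (q - 1)|) :=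
  weighted_integral_estimate_general f F q hf hfpos hfint hF hlim ρ₀ φ hφpos hφderiv hφtop lam hlam'
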